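/- arXiv:1801.07304 — 2 statements merged into one kernel-verified Lean document; each statement's English description precedes it below -/
import Mathlib

section
/- For all real α > -1, β > 0 and all z ∈ ℂ, the normalized Bessel functions satisfy the Sonine formula j_{α+β}(z) = 2 (Γ(α+β+1)/(Γ(α+1)Γ(β))) ∫₀¹ j_α(zx) x^{2α+1} (1-x²)^{β-1} dx. -/
/-!
Expand `j_α(zx)` in its power series. The coefficients decay like `1/k!`, so the series can be
integrated term by term against the weight `x^{2α+1} (1-x²)^{β-1}`, and after the substitution
`t = x²` the `k`-th term is a Beta integral:
`∫₀¹ x^{2k} x^{2α+1} (1-x²)^{β-1} dx = Γ(α+k+1) Γ(β) / (2 Γ(α+β+k+1))`.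
The factor `Γ(α+k+1)` cancels the one in the `k`-th coefficient of `j_α`, leaving
`Γ(α+1) Γ(β) / (2 Γ(α+β+1))` times the `k`-th coefficient of `j_{α+β}`.
-/

open MeasureTheory Complex

/-- The normalized one-variable Bessel function `j_α(z) = ₀F₁(α+1; -z²/4)`. -/
noncomputable def jBessel (α z : ℂ) : ℂ :=
  ∑' k : ℕ, (-1) ^ k * Complex.Gamma (α + 1) /
      ((k.factorial : ℂ) * Complex.Gamma (α + k + 1)) * (z / 2) ^ (2 * k)

open Set

lemma Real.min_one_mul_Gamma_le_Gamma_add_natCast {γ : ℝ} (hγ : 0 < γ) (k : ℕ) :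
    min 1 γ * Real.Gamma γ ≤ Real.Gamma (γ + k) := by
  have hΓ := Real.Gamma_pos_of_pos hγ
  induction k with
  | zero => simpa using mul_le_of_le_one_left hΓ.le (min_le_left 1 γ)
  | succ n ih =>
    rw [Nat.cast_succ, ← add_assoc, Real.Gamma_add_one (by positivity)]
    rcases n.eq_zero_or_pos with rfl | hn
    · simpa using mul_le_mul_of_nonneg_right (min_le_right 1 γ) hΓ.le
    · have hone : 1 ≤ γ + n := by
        have : (1 : ℝ) ≤ n := by exact_mod_cast hn
        linarith
      exact ih.trans (le_mul_of_one_le_left (Real.Gamma_pos_of_pos (by positivity)).le hone)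

lemma image_sq_Ioc_zero_one : (fun x : ℝ => x ^ 2) '' Ioc 0 1 = Ioc 0 1 := by
  ext t
  constructor
  · rintro ⟨x, ⟨hx0, hx1⟩, rfl⟩
    exact ⟨by positivity, pow_le_one₀ hx0.le hx1⟩
  · rintro ⟨ht0, ht1⟩
    exact ⟨√t, ⟨Real.sqrt_pos.2 ht0, Real.sqrt_le_one.2 ht1⟩, Real.sq_sqrt ht0.le⟩

section ChangeOfVariables

variable {E : Type*} [NormedAddCommGroup E] [NormedSpace ℝ E]

lemma hasDerivWithinAt_sq_Ioc :
    ∀ x ∈ Ioc (0 : ℝ) 1, HasDerivWithinAt (fun y : ℝ => y ^ 2) (2 * x) (Ioc 0 1) x :=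
  fun x _ => by simpa using (hasDerivAt_pow 2 x).hasDerivWithinAt

lemma injOn_sq_Ioc : InjOn (fun x : ℝ => x ^ 2) (Ioc 0 1) :=
  (pow_left_strictMonoOn₀ two_ne_zero).injOn.mono fun _ hx => hx.1.le

lemma abs_two_mul_smul_eqOn (g : ℝ → E) :
    EqOn (fun x => |2 * x| • g (x ^ 2)) (fun x => (2 * x) • g (x ^ 2)) (Ioc 0 1) :=
  fun x hx => by simp only [abs_of_pos (by linarith [hx.1] : (0 : ℝ) < 2 * x)]

lemma integrableOn_Ioc_comp_sq_iff {g : ℝ → E} :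
    IntegrableOn (fun x => (2 * x) • g (x ^ 2)) (Ioc 0 1) ↔ IntegrableOn g (Ioc 0 1) := by
  rw [← integrableOn_congr_fun (abs_two_mul_smul_eqOn g) measurableSet_Ioc,
    ← integrableOn_image_iff_integrableOn_abs_deriv_smul measurableSet_Ioc
      hasDerivWithinAt_sq_Ioc injOn_sq_Ioc, image_sq_Ioc_zero_one]

lemma setIntegral_Ioc_comp_sq (g : ℝ → E) :
    ∫ x in Ioc 0 1, (2 * x) • g (x ^ 2) = ∫ t in Ioc 0 1, g t := by
  rw [← setIntegral_congr_fun measurableSet_Ioc (abs_two_mul_smul_eqOn g),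
    ← integral_image_eq_integral_abs_deriv_smul measurableSet_Ioc hasDerivWithinAt_sq_Ioc
      injOn_sq_Ioc, image_sq_Ioc_zero_one]

end ChangeOfVariables

lemma ofReal_rpow_mul_one_sub_rpow_eqOn (a b : ℝ) :
    EqOn (fun t : ℝ => ((t ^ a * (1 - t) ^ (b - 1) : ℝ) : ℂ))
      (fun t : ℝ => (t : ℂ) ^ ((a + 1 : ℂ) - 1) * (1 - (t : ℂ)) ^ ((b : ℂ) - 1)) (Ioc 0 1) :=
  fun t ht => by
    simp only [add_sub_cancel_right, ofReal_mul, ofReal_cpow ht.1.le,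
      ofReal_cpow (sub_nonneg.2 ht.2), ofReal_sub, ofReal_one]

lemma integrableOn_rpow_mul_one_sub_rpow {a b : ℝ} (ha : -1 < a) (hb : 0 < b) :
    IntegrableOn (fun t : ℝ => t ^ a * (1 - t) ^ (b - 1)) (Ioc 0 1) := by
  have hβ := betaIntegral_convergent (u := a + 1) (v := b)
    (by simp only [add_re, ofReal_re, one_re]; linarith) (by simpa using hb)
  rw [intervalIntegrable_iff_integrableOn_Ioc_of_le zero_le_one,
    ← integrableOn_congr_fun (ofReal_rpow_mul_one_sub_rpow_eqOn a b) measurableSet_Ioc] at hβ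
  have hre := hβ.re
  simp only [RCLike.re_to_complex, ofReal_re] at hre
  exact hre

lemma integral_rpow_mul_one_sub_rpow {a b : ℝ} (ha : -1 < a) (hb : 0 < b) :
    ∫ t in Ioc 0 1, t ^ a * (1 - t) ^ (b - 1) =
      Real.Gamma (a + 1) * Real.Gamma b / Real.Gamma (a + b + 1) := by
  have hΓ := Gamma_mul_Gamma_eq_betaIntegral (s := a + 1) (t := b)
    (by simp only [add_re, ofReal_re, one_re]; linarith) (by simpa using hb)
  rw [betaIntegral, intervalIntegral.integral_of_le zero_le_one,
    ← setIntegral_congr_fun measurableSet_Ioc (ofReal_rpow_mul_one_sub_rpow_eqOn a b)] at hΓ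
  simp only [integral_complex_ofReal] at hΓ
  rw [show (a : ℂ) + 1 = (a + 1 : ℝ) by push_cast; ring,
    show ((a + 1 : ℝ) : ℂ) + b = (a + b + 1 : ℝ) by push_cast; ring] at hΓ
  simp only [Gamma_ofReal] at hΓ
  rw [eq_div_iff (Real.Gamma_pos_of_pos (by linarith)).ne', mul_comm]
  exact_mod_cast hΓ.symm

lemma sq_rpow_smul_eqOn (a b : ℝ) :
    EqOn (fun x : ℝ => (2 * x) • ((x ^ 2) ^ a * (1 - x ^ 2) ^ (b - 1)))
      (fun x => 2 * (x ^ (2 * a + 1) * (1 - x ^ 2) ^ (b - 1))) (Ioc 0 1) := fun x hx => by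
  have hsq : (x ^ 2) ^ a = x ^ (2 * a) := by rw [← Real.rpow_two, ← Real.rpow_mul hx.1.le]
  simp only [smul_eq_mul, hsq, Real.rpow_add_one hx.1.ne']
  ring

lemma integrableOn_rpow_mul_one_sub_sq_rpow {a b : ℝ} (ha : -1 < a) (hb : 0 < b) :
    IntegrableOn (fun x : ℝ => x ^ (2 * a + 1) * (1 - x ^ 2) ^ (b - 1)) (Ioc 0 1) := by
  have h := integrableOn_Ioc_comp_sq_iff.2 (integrableOn_rpow_mul_one_sub_rpow ha hb)
  rw [integrableOn_congr_fun (sq_rpow_smul_eqOn a b) measurableSet_Ioc] at h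
  exact (integrable_const_mul_iff (isUnit_of_invertible 2) _).1 h

lemma integral_rpow_mul_one_sub_sq_rpow {a b : ℝ} (ha : -1 < a) (hb : 0 < b) :
    ∫ x in Ioc 0 1, x ^ (2 * a + 1) * (1 - x ^ 2) ^ (b - 1) =
      Real.Gamma (a + 1) * Real.Gamma b / (2 * Real.Gamma (a + b + 1)) := by
  have h := setIntegral_Ioc_comp_sq fun t : ℝ => t ^ a * (1 - t) ^ (b - 1)
  rw [setIntegral_congr_fun measurableSet_Ioc (sq_rpow_smul_eqOn a b), integral_const_mul,
    integral_rpow_mul_one_sub_rpow ha hb] at h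
  rw [mul_comm 2 (Real.Gamma _), ← div_div, ← h]
  ring

lemma integral_pow_mul_rpow_mul_one_sub_sq_rpow {a b : ℝ} (ha : -1 < a) (hb : 0 < b) (k : ℕ) :
    ∫ x in Ioc 0 1, x ^ (2 * k) * (x ^ (2 * a + 1) * (1 - x ^ 2) ^ (b - 1)) =
      Real.Gamma (a + k + 1) * Real.Gamma b / (2 * Real.Gamma (a + b + k + 1)) := by
  have hpow : EqOn (fun x : ℝ => x ^ (2 * k) * (x ^ (2 * a + 1) * (1 - x ^ 2) ^ (b - 1)))
      (fun x => x ^ (2 * (a + k) + 1) * (1 - x ^ 2) ^ (b - 1)) (Ioc 0 1) := fun x hx => by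
    dsimp only
    rw [← mul_assoc, ← Real.rpow_natCast, ← Real.rpow_add hx.1]
    push_cast
    ring_nf
  rw [setIntegral_congr_fun measurableSet_Ioc hpow,
    integral_rpow_mul_one_sub_sq_rpow (by linarith [k.cast_nonneg' (α := ℝ)]) hb,
    add_right_comm a (k : ℝ) b]

lemma integral_tsum_mul_pow_mul {w : ℝ → ℝ} (hw : IntegrableOn w (Ioc 0 1))
    (hw₀ : ∀ x ∈ Ioc (0 : ℝ) 1, 0 ≤ w x) {c : ℕ → ℂ} (hc : Summable fun k => ‖c k‖) :
    ∫ x in Ioc 0 1, (∑' k, c k * ((x ^ (2 * k) : ℝ) : ℂ)) * (w x : ℂ) =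
      ∑' k, c k * ((∫ x in Ioc 0 1, x ^ (2 * k) * w x : ℝ) : ℂ) := by
  have hpow_le : ∀ k, ∀ x ∈ Ioc (0 : ℝ) 1, x ^ (2 * k) ≤ 1 := fun k x hx =>
    pow_le_one₀ hx.1.le hx.2
  have hmoment : ∀ k, IntegrableOn (fun x => x ^ (2 * k) * w x) (Ioc 0 1) := fun k =>
    hw.bdd_mul (c := 1) (continuous_pow _).aestronglyMeasurable <|
      (ae_restrict_iff' measurableSet_Ioc).2 <| .of_forall fun x hx => by
        rw [Real.norm_eq_abs, abs_of_nonneg (pow_nonneg hx.1.le _)]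
        exact hpow_le k x hx
  set F : ℕ → ℝ → ℂ := fun k x => c k * ((x ^ (2 * k) * w x : ℝ) : ℂ)
  have hF : ∀ k, IntegrableOn (F k) (Ioc 0 1) := fun k => (hmoment k).ofReal.const_mul (c k)
  have hF_norm : ∀ k, ∫ x in Ioc 0 1, ‖F k x‖ ≤ ‖c k‖ * ∫ x in Ioc 0 1, w x := fun k => by
    rw [← integral_const_mul]
    refine setIntegral_mono_on (hF k).norm (hw.const_mul _) measurableSet_Ioc fun x hx => ?_
    rw [norm_mul, norm_real,
      Real.norm_of_nonneg (mul_nonneg (pow_nonneg hx.1.le _) (hw₀ x hx))]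
    exact mul_le_mul_of_nonneg_left
      (mul_le_of_le_one_left (hw₀ x hx) (hpow_le k x hx)) (norm_nonneg _)
  have hsum : Summable fun k => ∫ x in Ioc 0 1, ‖F k x‖ :=
    (hc.mul_right _).of_nonneg_of_le (fun k => integral_nonneg fun _ => norm_nonneg _) hF_norm
  calc ∫ x in Ioc 0 1, (∑' k, c k * ((x ^ (2 * k) : ℝ) : ℂ)) * (w x : ℂ)
      = ∫ x in Ioc 0 1, ∑' k, F k x := by
        congr with x
        rw [← tsum_mul_right]
        exact tsum_congr fun k => by simp only [F]; push_cast; ring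
    _ = ∑' k, ∫ x in Ioc 0 1, F k x := (integral_tsum_of_summable_integral_norm hF hsum).symm
    _ = ∑' k, c k * ((∫ x in Ioc 0 1, x ^ (2 * k) * w x : ℝ) : ℂ) := by
        simp only [F, integral_const_mul, integral_complex_ofReal]

noncomputable def jBesselCoeff (α : ℂ) (k : ℕ) : ℂ :=
  (-1) ^ k * Gamma (α + 1) / ((k.factorial : ℂ) * Gamma (α + k + 1))

lemma jBessel_eq_tsum (α z : ℂ) :
    jBessel α z = ∑' k, jBesselCoeff α k * (z / 2) ^ (2 * k) := rfl

lemma jBesselCoeff_ofReal (α : ℝ) (k : ℕ) :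
    jBesselCoeff α k =
      (-1) ^ k * Real.Gamma (α + 1) / ((k.factorial : ℂ) * Real.Gamma (α + k + 1)) := by
  rw [jBesselCoeff, ← Gamma_ofReal, ← Gamma_ofReal]
  push_cast
  rfl

lemma norm_jBesselCoeff_le {α : ℝ} (hα : -1 < α) (k : ℕ) :
    ‖jBesselCoeff α k‖ ≤ (min 1 (α + 1))⁻¹ / k.factorial := by
  have hα₁ : 0 < α + 1 := by linarith
  have hm : 0 < min 1 (α + 1) := lt_min one_pos hα₁
  have hΓ := Real.Gamma_pos_of_pos hα₁
  have hΓk : min 1 (α + 1) * Real.Gamma (α + 1) ≤ Real.Gamma (α + k + 1) := by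
    rw [add_right_comm]
    exact Real.min_one_mul_Gamma_le_Gamma_add_natCast hα₁ k
  have hnorm :
      ‖jBesselCoeff α k‖ = Real.Gamma (α + 1) / (k.factorial * Real.Gamma (α + k + 1)) := by
    rw [jBesselCoeff_ofReal]
    simp [abs_of_pos hΓ, abs_of_pos ((mul_pos hm hΓ).trans_le hΓk)]
  calc ‖jBesselCoeff α k‖
      ≤ Real.Gamma (α + 1) / (k.factorial * (min 1 (α + 1) * Real.Gamma (α + 1))) := by
        rw [hnorm]; gcongr
    _ = (min 1 (α + 1))⁻¹ / k.factorial := by field_simp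

lemma summable_norm_jBesselCoeff_mul_pow {α : ℝ} (hα : -1 < α) (w : ℂ) :
    Summable fun k => ‖jBesselCoeff α k * w ^ k‖ := by
  refine ((Real.summable_pow_div_factorial ‖w‖).mul_left (min 1 (α + 1))⁻¹).of_nonneg_of_le
    (fun _ => norm_nonneg _) fun k => ?_
  calc ‖jBesselCoeff α k * w ^ k‖ = ‖jBesselCoeff α k‖ * ‖w‖ ^ k := by rw [norm_mul, norm_pow]
    _ ≤ (min 1 (α + 1))⁻¹ / k.factorial * ‖w‖ ^ k := by
        gcongr; exact norm_jBesselCoeff_le hα k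
    _ = (min 1 (α + 1))⁻¹ * (‖w‖ ^ k / k.factorial) := by ring

lemma jBesselCoeff_add {α β : ℝ} (hα : -1 < α) (hβ : 0 < β) (k : ℕ) :
    jBesselCoeff (α + β) k =
      Real.Gamma (α + β + 1) / (Real.Gamma (α + 1) * Real.Gamma β) *
        (jBesselCoeff α k *
          (Real.Gamma (α + k + 1) * Real.Gamma β / Real.Gamma (α + β + k + 1))) := by
  have hΓ : (Real.Gamma (α + 1) : ℂ) ≠ 0 :=
    ofReal_ne_zero.2 (Real.Gamma_pos_of_pos (by linarith)).ne'
  have hΓβ : (Real.Gamma β : ℂ) ≠ 0 := ofReal_ne_zero.2 (Real.Gamma_pos_of_pos hβ).ne'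
  have hΓk : (Real.Gamma (α + k + 1) : ℂ) ≠ 0 :=
    ofReal_ne_zero.2 (Real.Gamma_pos_of_pos (by linarith [k.cast_nonneg' (α := ℝ)])).ne'
  rw [← ofReal_add, jBesselCoeff_ofReal, jBesselCoeff_ofReal]
  field_simp

/-- Sonine formula: for real `α > -1`, `β > 0` and `z ∈ ℂ`,
`j_{α+β}(z) = 2 Γ(α+β+1)/(Γ(α+1)Γ(β)) ∫₀¹ j_α(zx) x^{2α+1} (1-x²)^{β-1} dx`. -/
theorem stmt_1 (α β : ℝ) (hα : α > -1) (hβ : β > 0) (z : ℂ) :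
    jBessel ((α : ℂ) + (β : ℂ)) z =
      2 * ((Real.Gamma (α + β + 1) : ℂ) / ((Real.Gamma (α + 1) : ℂ) * (Real.Gamma β : ℂ))) *
        ∫ x in (0:ℝ)..1,
          jBessel (α : ℂ) (z * (x : ℂ)) *
            ((Real.rpow x (2 * α + 1) * Real.rpow (1 - x ^ 2) (β - 1) : ℝ) : ℂ) := by
  have hw₀ : ∀ x ∈ Ioc (0 : ℝ) 1, 0 ≤ x ^ (2 * α + 1) * (1 - x ^ 2) ^ (β - 1) := fun x hx =>
    mul_nonneg (Real.rpow_nonneg hx.1.le _) (Real.rpow_nonneg (by nlinarith [hx.1, hx.2]) _)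
  have hc : Summable fun k => ‖jBesselCoeff α k * (z / 2) ^ (2 * k)‖ := by
    simpa only [pow_mul] using summable_norm_jBesselCoeff_mul_pow hα ((z / 2) ^ 2)
  have hexp (x : ℝ) : jBessel α (z * x) =
      ∑' k, jBesselCoeff α k * (z / 2) ^ (2 * k) * ((x ^ (2 * k) : ℝ) : ℂ) := by
    rw [jBessel_eq_tsum]
    exact tsum_congr fun k => by push_cast; ring
  simp only [Real.rpow_eq_pow, hexp]
  rw [intervalIntegral.integral_of_le zero_le_one,
    integral_tsum_mul_pow_mul (integrableOn_rpow_mul_one_sub_sq_rpow hα hβ) hw₀ hc,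
    jBessel_eq_tsum, ← tsum_mul_left]
  refine tsum_congr fun k => ?_
  rw [integral_pow_mul_rpow_mul_one_sub_sq_rpow hα hβ k, jBesselCoeff_add hα hβ k]
  push_cast
  ring
end

section
/- In the rank one case, for μ > 0 and ν₁, ν₂ > 0, the image measure of β_{μ,ν₁} ⊗ β_{μ+ν₁,ν₂} under the multiplication map (r,s) ↦ rs on (0,1)×(0,1) equals β_{μ,ν₁+ν₂}, where β_{a,b} is the beta probability distribution with density x^{a-1}(1-x)^{b-1}/B(a,b) on (0,1). -/
open MeasureTheory

/-- The classical beta probability measure on `(0,1)` with parameters `a, b > 0`,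
with density `x^{a-1}(1-x)^{b-1}/B(a,b)` with respect to Lebesgue measure. -/
noncomputable def betaMeasure (a b : ℝ) : Measure ℝ :=
  volume.withDensity fun x =>
    ENNReal.ofReal
      (Set.indicator (Set.Ioo (0:ℝ) 1)
        (fun x => Real.rpow x (a - 1) * Real.rpow (1 - x) (b - 1) /
          (Real.Gamma a * Real.Gamma b / Real.Gamma (a + b))) x)

/-! The product of independent reals with densities `f` and `g` has density
`t ↦ ∫ |s|⁻¹ g(s) f(t/s) ds`. For `f = β_{μ,ν₁}` and `g = β_{μ+ν₁,ν₂}` the integrand lives on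
`t < s < 1`, where the powers of `s` cancel and it equals
`t^{μ-1} (s-t)^{ν₁-1} (1-s)^{ν₂-1} / (B(μ,ν₁) B(μ+ν₁,ν₂))`. The substitution `s = t + (1-t)u`
evaluates the remaining integral as `(1-t)^{ν₁+ν₂-1} B(ν₁,ν₂)`, and
`B(μ,ν₁) B(μ+ν₁,ν₂) = B(μ,ν₁+ν₂) B(ν₁,ν₂)` since both equal `Γ(μ)Γ(ν₁)Γ(ν₂)/Γ(μ+ν₁+ν₂)`. -/

open Set ENNReal
open ProbabilityTheory (beta beta_pos betaPDF betaPDF_eq betaPDF_of_pos_lt_one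
  betaPDF_eq_zero_of_nonpos betaPDF_eq_zero_of_one_le)

lemma lintegral_comp_mul_right_of_ne_zero {s : ℝ} (hs : s ≠ 0) {G : ℝ → ℝ≥0∞}
    (hG : Measurable G) : ∫⁻ r, G (r * s) = ENNReal.ofReal |s⁻¹| * ∫⁻ t, G t := by
  rw [← lintegral_map hG (measurable_mul_const s), Real.map_volume_mul_right hs,
    lintegral_smul_measure, smul_eq_mul]

/-- At `s = 0` the factor `|s⁻¹|` is `0` by convention, which is harmless: `{0}` is null. -/
theorem map_mul_prod_withDensity {f g : ℝ → ℝ≥0∞} (hf : Measurable f) (hg : Measurable g) :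
    Measure.map (fun p : ℝ × ℝ => p.1 * p.2) ((volume.withDensity f).prod (volume.withDensity g))
      = volume.withDensity (fun t => ∫⁻ s, ENNReal.ofReal |s⁻¹| * g s * f (t / s)) := by
  refine Measure.ext_of_lintegral _ fun φ hφ => ?_
  have hinner : ∀ᵐ s, ∫⁻ r, f r * φ (r * s) = ENNReal.ofReal |s⁻¹| * ∫⁻ t, f (t / s) * φ t := by
    filter_upwards [Measure.ae_ne volume 0] with s hs
    rw [← lintegral_comp_mul_right_of_ne_zero hs (by fun_prop)]
    simp_rw [mul_div_cancel_right₀ _ hs]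
  rw [lintegral_map hφ (by fun_prop), prod_withDensity hf hg,
    lintegral_withDensity_eq_lintegral_mul _ (by fun_prop) (by fun_prop),
    lintegral_withDensity_eq_lintegral_mul _ (by fun_prop) hφ, lintegral_prod_symm _ (by fun_prop)]
  calc ∫⁻ s, ∫⁻ r, f r * g s * φ (r * s)
      = ∫⁻ s, g s * ∫⁻ r, f r * φ (r * s) := by
        refine lintegral_congr fun s => ?_
        rw [← lintegral_const_mul _ (by fun_prop)]
        exact lintegral_congr fun r => by ring
    _ = ∫⁻ s, ∫⁻ t, ENNReal.ofReal |s⁻¹| * g s * f (t / s) * φ t := by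
        refine lintegral_congr_ae ?_
        filter_upwards [hinner] with s hs
        rw [hs, ← mul_assoc, ← lintegral_const_mul _ (by fun_prop)]
        exact lintegral_congr fun t => by ring
    _ = ∫⁻ t, (∫⁻ s, ENNReal.ofReal |s⁻¹| * g s * f (t / s)) * φ t := by
        rw [lintegral_lintegral_swap (by fun_prop)]
        exact lintegral_congr fun t => lintegral_mul_const _ (by fun_prop)

lemma measurable_betaPDF (a b : ℝ) : Measurable (betaPDF a b) :=
  (ProbabilityTheory.measurable_betaPDFReal a b).ennreal_ofReal

lemma lintegral_Ioo_rpow_mul_one_sub_rpow {a b : ℝ} (ha : 0 < a) (hb : 0 < b) :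
    ∫⁻ x in Ioo 0 1, ENNReal.ofReal (x ^ (a - 1) * (1 - x) ^ (b - 1)) =
      ENNReal.ofReal (beta a b) := by
  have hB := beta_pos ha hb
  have h := ProbabilityTheory.lintegral_betaPDF_eq_one ha hb
  rw [ProbabilityTheory.lintegral_betaPDF] at h
  simp_rw [mul_assoc, ENNReal.ofReal_mul (one_div_pos.2 hB).le] at h
  rw [lintegral_const_mul _ (by fun_prop), one_div, ENNReal.ofReal_inv_of_pos hB] at h
  simpa using ENNReal.eq_inv_of_mul_eq_one_left ((mul_comm _ _).trans h)

lemma lintegral_Ioo_sub_rpow_mul_sub_rpow {a c p q : ℝ} (hac : a < c) (hp : 0 < p) (hq : 0 < q) :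
    ∫⁻ s in Ioo a c, ENNReal.ofReal ((s - a) ^ (p - 1) * (c - s) ^ (q - 1)) =
      ENNReal.ofReal ((c - a) ^ (p + q - 1) * beta p q) := by
  have hca : 0 < c - a := sub_pos.2 hac
  have himage : (fun u => (c - a) * u + a) '' Ioo 0 1 = Ioo a c := by
    rw [image_affine_Ioo hca]; simp
  rw [← himage, lintegral_image_eq_lintegral_abs_deriv_mul (f := fun u => (c - a) * u + a)
    measurableSet_Ioo
    (fun u _ => (((hasDerivAt_id u).const_mul (c - a)).add_const a).hasDerivWithinAt)
    (fun u _ v _ huv => by simpa [hca.ne'] using huv)]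
  rw [ENNReal.ofReal_mul (by positivity), ← lintegral_Ioo_rpow_mul_one_sub_rpow hp hq,
    ← lintegral_const_mul _ (by fun_prop)]
  refine setLIntegral_congr_fun measurableSet_Ioo fun u ⟨hu0, hu1⟩ => ?_
  rw [← ENNReal.ofReal_mul (abs_nonneg _), ← ENNReal.ofReal_mul (by positivity)]
  congr 1
  rw [show (c - a) * u + a - a = (c - a) * u by ring,
    show c - ((c - a) * u + a) = (c - a) * (1 - u) by ring,
    Real.mul_rpow hca.le hu0.le, Real.mul_rpow hca.le (by linarith),
    show p + q - 1 = (p - 1) + (q - 1) + 1 by ring, Real.rpow_add hca, Real.rpow_add hca,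
    Real.rpow_one, mul_one, abs_of_pos hca]
  ring

lemma beta_mul_beta_add {a b c : ℝ} (ha : 0 < a) (hb : 0 < b) (hc : 0 < c) :
    beta a b * beta (a + b) c = beta a (b + c) * beta b c := by
  have := Real.Gamma_pos_of_pos (add_pos ha hb)
  have := Real.Gamma_pos_of_pos (add_pos hb hc)
  simp only [beta, ← add_assoc]
  field_simp

lemma betaPDF_mul_betaPDF_div_eq_zero {a b p q t s : ℝ} (h : ¬(0 < t ∧ t < s ∧ s < 1)) :
    betaPDF p q s * betaPDF a b (t / s) = 0 := by
  rcases le_or_gt s 0 with hs0 | hs0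
  · rw [betaPDF_eq_zero_of_nonpos hs0, zero_mul]
  rcases le_or_gt 1 s with hs1 | hs1
  · rw [betaPDF_eq_zero_of_one_le hs1, zero_mul]
  rcases le_or_gt t 0 with ht0 | ht0
  · rw [betaPDF_eq_zero_of_nonpos (div_nonpos_of_nonpos_of_nonneg ht0 hs0.le), mul_zero]
  · have hst : s ≤ t := by by_contra! hts; exact h ⟨ht0, hts, hs1⟩
    rw [betaPDF_eq_zero_of_one_le ((one_le_div hs0).2 hst), mul_zero]

lemma betaPDF_mul_betaPDF_div_of_lt {a b c t s : ℝ} (ha : 0 < a) (hb : 0 < b) (hc : 0 < c)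
    (ht : 0 < t) (hts : t < s) (hs : s < 1) :
    ENNReal.ofReal |s⁻¹| * betaPDF (a + b) c s * betaPDF a b (t / s) =
      ENNReal.ofReal (t ^ (a - 1) / (beta a b * beta (a + b) c)) *
        ENNReal.ofReal ((s - t) ^ (b - 1) * (1 - s) ^ (c - 1)) := by
  have hs0 : 0 < s := ht.trans hts
  have hB₁ := beta_pos ha hb
  have hB₂ := beta_pos (add_pos ha hb) hc
  rw [betaPDF_of_pos_lt_one hs0 hs,
    betaPDF_of_pos_lt_one (div_pos ht hs0) ((div_lt_one hs0).2 hts),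
    ← ENNReal.ofReal_mul (abs_nonneg _), ← ENNReal.ofReal_mul (by positivity),
    ← ENNReal.ofReal_mul (by positivity)]
  congr 1
  rw [abs_of_pos (inv_pos.2 hs0), show 1 - t / s = (s - t) / s by field_simp,
    Real.div_rpow ht.le hs0.le, Real.div_rpow (by linarith) hs0.le,
    show a + b - 1 = (a - 1) + (b - 1) + 1 by ring, Real.rpow_add hs0, Real.rpow_add hs0,
    Real.rpow_one]
  have := Real.rpow_pos_of_pos hs0 (a - 1)
  have := Real.rpow_pos_of_pos hs0 (b - 1)
  field_simp

lemma betaPDF_mul_betaPDF_div_eq_indicator {a b c t : ℝ} (ha : 0 < a) (hb : 0 < b) (hc : 0 < c)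
    (ht : 0 < t) (s : ℝ) :
    ENNReal.ofReal |s⁻¹| * betaPDF (a + b) c s * betaPDF a b (t / s) =
      (Ioo t 1).indicator (fun s => ENNReal.ofReal (t ^ (a - 1) / (beta a b * beta (a + b) c)) *
        ENNReal.ofReal ((s - t) ^ (b - 1) * (1 - s) ^ (c - 1))) s := by
  by_cases hs : s ∈ Ioo t 1
  · rw [indicator_of_mem hs, betaPDF_mul_betaPDF_div_of_lt ha hb hc ht hs.1 hs.2]
  · rw [indicator_of_notMem hs, mul_assoc,
      betaPDF_mul_betaPDF_div_eq_zero fun h => hs ⟨h.2.1, h.2.2⟩, mul_zero]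

lemma lintegral_betaPDF_mul_betaPDF_div {a b c : ℝ} (ha : 0 < a) (hb : 0 < b) (hc : 0 < c)
    (t : ℝ) :
    ∫⁻ s, ENNReal.ofReal |s⁻¹| * betaPDF (a + b) c s * betaPDF a b (t / s) =
      betaPDF a (b + c) t := by
  by_cases ht : t ∈ Ioo 0 1
  · obtain ⟨ht0, ht1⟩ := ht
    have hB := beta_pos ha (add_pos hb hc)
    have hB' := beta_pos hb hc
    simp_rw [betaPDF_mul_betaPDF_div_eq_indicator ha hb hc ht0]
    rw [lintegral_indicator measurableSet_Ioo, lintegral_const_mul _ (by fun_prop),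
      lintegral_Ioo_sub_rpow_mul_sub_rpow ht1 hb hc, beta_mul_beta_add ha hb hc,
      ← ENNReal.ofReal_mul (by positivity), betaPDF_of_pos_lt_one ht0 ht1]
    congr 1
    field_simp
  · rw [betaPDF_eq, if_neg (show ¬(0 < t ∧ t < 1) from ht), ENNReal.ofReal_zero]
    refine (lintegral_congr fun s => ?_).trans lintegral_zero
    rw [mul_assoc, betaPDF_mul_betaPDF_div_eq_zero fun h => ht ⟨h.1, h.2.1.trans h.2.2⟩,
      mul_zero]

lemma betaMeasure_eq_withDensity_betaPDF (a b : ℝ) :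
    betaMeasure a b = volume.withDensity (betaPDF a b) := by
  rw [betaMeasure]
  congr 1
  ext x
  by_cases hx : x ∈ Ioo 0 1
  · rw [indicator_of_mem hx, betaPDF_of_pos_lt_one hx.1 hx.2, beta]
    congr 1
    simp only [Real.rpow_eq_pow]
    ring
  · rw [indicator_of_notMem hx, betaPDF_eq, if_neg (show ¬(0 < x ∧ x < 1) from hx)]

/-- Rank-one composition of beta measures: the image of `β_{μ,ν₁} ⊗ β_{μ+ν₁,ν₂}` under
`(r,s) ↦ rs` equals `β_{μ,ν₁+ν₂}`. -/
theorem stmt_10 (μ ν₁ ν₂ : ℝ) (hμ : μ > 0) (hν₁ : ν₁ > 0) (hν₂ : ν₂ > 0) :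
    Measure.map (fun p : ℝ × ℝ => p.1 * p.2)
        ((betaMeasure μ ν₁).prod (betaMeasure (μ + ν₁) ν₂)) =
      betaMeasure μ (ν₁ + ν₂) := by
  simp only [betaMeasure_eq_withDensity_betaPDF]
  rw [map_mul_prod_withDensity (measurable_betaPDF _ _) (measurable_betaPDF _ _)]
  exact congrArg _ (funext (lintegral_betaPDF_mul_betaPDF_div hμ hν₁ hν₂))
end
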